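/- Let F be the field of finite and cofinite subsets of ℕ, with charge μ defined by μ({n}) = 2^{−n} on finite sets (by additivity) and μ(ℕ \ S) = 5 − μ(S) for finite S. Let f_n = 1_{{1,...,n}}. Then {f_n} is Cauchy in outer charge μ* (i.e., for every δ > 0, μ*({|f_n − f_m| > δ}) → 0 as m,n → ∞), but there is no totally measurable function f with f_n → f in μ*. -/

import Mathlib

/-! Each point `k` has charge `2⁻ᵏ`, while every infinite set of the field has charge at least
`3`. So `fₙ` and `fₘ` differ only on the finite set `(min n m, max n m]`, of charge at most
`2^{-min n m}`. Conversely, positive point masses make convergence in `μ*` imply pointwise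
convergence, so a limit `g` equals `1` on `{1, 2, …}`; but some `{|fₙ − g| > 1/4}` has `μ* < 3`,
hence is finite, although it contains every `k > n`. -/

open Set ENNReal Filter Topology

/-- The field of finite and cofinite subsets of `ℕ`. -/
def cofinField : Set (Set ℕ) := {S | S.Finite ∨ Sᶜ.Finite}

/-- The weight `w n = 2^{-n}`. -/
noncomputable def w : ℕ → ℝ≥0∞ := fun n => (2:ℝ≥0∞)⁻¹ ^ n

open Classical in
/-- The charge: `μ S = ∑_{n ∈ S} 2^{-n}` for finite `S`, and
`μ S = 5 − ∑_{n ∉ S} 2^{-n}` for cofinite `S`. -/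
noncomputable def cofinCharge (S : Set ℕ) : ℝ≥0∞ :=
  if S.Finite then ∑' n : ℕ, S.indicator w n else 5 - ∑' n : ℕ, Sᶜ.indicator w n

noncomputable def outerCharge (𝓕 : Set (Set ℕ)) (μ : Set ℕ → ℝ≥0∞) (E : Set ℕ) : ℝ≥0∞ :=
  ⨅ (F : Set ℕ) (_ : F ∈ 𝓕) (_ : E ⊆ F), μ F

/-- A simple function over the field `𝓕`. -/
def IsSimpleFn (𝓕 : Set (Set ℕ)) (g : ℕ → ℝ) : Prop :=
  (Set.range g).Finite ∧ ∀ c : ℝ, c ≠ 0 → {k | g k = c} ∈ 𝓕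

/-- `g_n → g` in outer charge. -/
def TendstoInCharge (𝓕 : Set (Set ℕ)) (μ : Set ℕ → ℝ≥0∞) (g : ℕ → ℕ → ℝ) (f : ℕ → ℝ) : Prop :=
  ∀ δ : ℝ, 0 < δ →
    Tendsto (fun n => outerCharge 𝓕 μ {k | δ < |g n k - f k|}) atTop (𝓝 0)

/-- A totally measurable function: a `μ*`-limit of simple functions. -/
def TotallyMeasurable (𝓕 : Set (Set ℕ)) (μ : Set ℕ → ℝ≥0∞) (f : ℕ → ℝ) : Prop :=
  ∃ s : ℕ → ℕ → ℝ, (∀ j, IsSimpleFn 𝓕 (s j)) ∧ TendstoInCharge 𝓕 μ s f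

lemma tsum_w : ∑' n, w n = 2 := by
  simp [w, ENNReal.tsum_geometric, ENNReal.one_sub_inv_two]

lemma tsum_indicator_Ioi_w (j : ℕ) : ∑' k, (Ioi j).indicator w k = w j := by
  have hhead : ∀ k ∈ Finset.range (j + 1), (Ioi j).indicator w k = 0 := fun k hk =>
    indicator_of_notMem (notMem_Ioi.2 (Nat.lt_succ_iff.1 (Finset.mem_range.1 hk))) w
  have htail : ∀ i, (Ioi j).indicator w (i + (j + 1)) = w j * 2⁻¹ ^ (i + 1) := fun i => by
    rw [indicator_of_mem (by simp only [mem_Ioi]; omega)]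
    simp only [w, ← pow_add]
    congr 1; omega
  rw [← ENNReal.summable.sum_add_tsum_nat_add', Finset.sum_eq_zero hhead, zero_add]
  simp only [htail, ENNReal.tsum_mul_left, ENNReal.tsum_geometric_add_one]
  rw [ENNReal.one_sub_inv_two, inv_inv, ENNReal.inv_mul_cancel two_ne_zero ofNat_ne_top, mul_one]

lemma three_le_cofinCharge {F : Set ℕ} (hF : F.Infinite) : 3 ≤ cofinCharge F := by
  have hsum : ∑' n, Fᶜ.indicator w n ≤ 2 :=
    tsum_w ▸ ENNReal.tsum_le_tsum fun n => indicator_le_self _ _ _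
  rw [cofinCharge, if_neg hF]
  calc (3 : ℝ≥0∞) = 5 - 2 := by
        rw [show (5 : ℝ≥0∞) = 3 + 2 by norm_num, ENNReal.add_sub_cancel_right ofNat_ne_top]
    _ ≤ 5 - ∑' n, Fᶜ.indicator w n := tsub_le_tsub_left hsum 5

lemma w_le_cofinCharge {F : Set ℕ} {k : ℕ} (hk : k ∈ F) : w k ≤ cofinCharge F := by
  by_cases hF : F.Finite
  · rw [cofinCharge, if_pos hF]
    simpa [indicator_of_mem hk] using ENNReal.le_tsum (f := F.indicator w) k
  · calc w k ≤ 1 := pow_le_one' (ENNReal.inv_le_one.2 one_le_two) k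
      _ ≤ 3 := by norm_num
      _ ≤ cofinCharge F := three_le_cofinCharge hF

lemma cofinCharge_Ioc_le (a b : ℕ) : cofinCharge (Ioc a b) ≤ w a := by
  rw [cofinCharge, if_pos (finite_Ioc a b), ← tsum_indicator_Ioi_w a]
  exact ENNReal.tsum_le_tsum fun k =>
    indicator_le_indicator_of_subset Ioc_subset_Ioi_self (fun _ => zero_le) k

section outerCharge

variable {𝓕 : Set (Set ℕ)} {μ : Set ℕ → ℝ≥0∞} {E F : Set ℕ}

lemma outerCharge_le (hF : F ∈ 𝓕) (hEF : E ⊆ F) : outerCharge 𝓕 μ E ≤ μ F :=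
  iInf₂_le_of_le F hF (iInf_le _ hEF)

lemma le_outerCharge {c : ℝ≥0∞} (h : ∀ F ∈ 𝓕, E ⊆ F → c ≤ μ F) : c ≤ outerCharge 𝓕 μ E :=
  le_iInf₂ fun F hF => le_iInf (h F hF)

end outerCharge

lemma w_le_outerCharge {E : Set ℕ} {k : ℕ} (hk : k ∈ E) :
    w k ≤ outerCharge cofinField cofinCharge E :=
  le_outerCharge fun _ _ hEF => w_le_cofinCharge (hEF hk)

lemma finite_of_outerCharge_lt_three {E : Set ℕ}
    (h : outerCharge cofinField cofinCharge E < 3) : E.Finite := by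
  by_contra hE
  exact h.not_ge <| le_outerCharge fun _ _ hEF => three_le_cofinCharge (Set.Infinite.mono hEF hE)

lemma setOf_lt_abs_indicator_Icc_sub_subset {δ : ℝ} (hδ : 0 ≤ δ) (n m : ℕ) :
    {k | δ < |(Icc 1 n).indicator (fun _ => (1 : ℝ)) k - (Icc 1 m).indicator (fun _ => 1) k|}
      ⊆ Ioc (min n m) (max n m) := by
  intro k hk
  by_contra hkI
  have hnm : k ∈ Icc 1 n ↔ k ∈ Icc 1 m := by
    simp only [mem_Ioc, mem_Icc, not_and_or, not_lt, not_le] at hkI ⊢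
    omega
  simp only [mem_ofPred_eq, indicator_apply, hnm, sub_self, abs_zero] at hk
  exact hk.not_ge hδ

lemma tendsto_outerCharge_indicator_Icc_sub {δ : ℝ} (hδ : 0 ≤ δ) :
    Tendsto (fun p : ℕ × ℕ => outerCharge cofinField cofinCharge
        {k | δ < |(Icc 1 p.1).indicator (fun _ => (1 : ℝ)) k
          - (Icc 1 p.2).indicator (fun _ => 1) k|}) atTop (𝓝 0) := by
  have hbound : ∀ p : ℕ × ℕ, outerCharge cofinField cofinCharge
      {k | δ < |(Icc 1 p.1).indicator (fun _ => (1 : ℝ)) k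
        - (Icc 1 p.2).indicator (fun _ => 1) k|} ≤ w (min p.1 p.2) := fun p =>
    (outerCharge_le (Or.inl (finite_Ioc _ _))
      (setOf_lt_abs_indicator_Icc_sub_subset hδ p.1 p.2)).trans (cofinCharge_Ioc_le _ _)
  have hmin : Tendsto (fun p : ℕ × ℕ => min p.1 p.2) atTop atTop :=
    tendsto_atTop_atTop.2 fun b => ⟨(b, b), fun _ hp => le_min hp.1 hp.2⟩
  have hw : Tendsto w atTop (𝓝 0) :=
    ENNReal.tendsto_pow_atTop_nhds_zero_of_lt_one (ENNReal.inv_lt_one.2 one_lt_two)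
  exact tendsto_of_tendsto_of_tendsto_of_le_of_le tendsto_const_nhds (hw.comp hmin)
    (fun _ => zero_le) hbound

lemma tendsto_apply_of_tendstoInCharge {s : ℕ → ℕ → ℝ} {g : ℕ → ℝ}
    (h : TendstoInCharge cofinField cofinCharge s g) (k : ℕ) :
    Tendsto (fun n => s n k) atTop (𝓝 (g k)) := by
  refine Metric.tendsto_nhds.2 fun ε hε => ?_
  filter_upwards [(h (ε / 2) (half_pos hε)).eventually_lt_const (show 0 < w k from ENNReal.pow_pos (by norm_num) k)]
    with n hn
  have hk : k ∉ {k | ε / 2 < |s n k - g k|} := fun hk => (w_le_outerCharge hk).not_gt hn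
  simp only [mem_ofPred_eq, not_lt] at hk
  exact (Real.dist_eq _ _).trans_lt (hk.trans_lt (half_lt_self hε))

lemma not_tendstoInCharge_indicator_Icc (g : ℕ → ℝ) :
    ¬ TendstoInCharge cofinField cofinCharge
      (fun n => (Icc 1 n).indicator (fun _ => (1 : ℝ))) g := by
  intro h
  have hg : ∀ k, 1 ≤ k → g k = 1 := fun k hk =>
    tendsto_nhds_unique (tendsto_apply_of_tendstoInCharge h k) <|
      tendsto_atTop_of_eventually_const (i₀ := k) fun n hn => indicator_of_mem (show k ∈ Icc 1 n from ⟨hk, hn⟩) _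
  obtain ⟨n, hn⟩ := ((h (1 / 4) (by norm_num)).eventually_lt_const
    (show (0 : ℝ≥0∞) < 3 by norm_num)).exists
  refine (finite_of_outerCharge_lt_three hn).not_infinite ((Ioi_infinite n).mono fun k hk => ?_)
  have hk : n < k := hk
  simp only [mem_ofPred_eq, indicator_of_notMem (show k ∉ Icc 1 n from fun h => by
    simp only [mem_Icc] at h; omega), hg k (by omega)]
  norm_num

/-- `f_n = 1_{{1,…,n}}` is Cauchy in outer charge but converges in outer charge to no
totally measurable function. -/
theorem cauchy_not_convergent_in_charge
    (f : ℕ → ℕ → ℝ) (hf : f = fun n => (Set.Icc 1 n).indicator (fun _ => (1:ℝ))) :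
    (∀ δ : ℝ, 0 < δ →
      Tendsto (fun p : ℕ × ℕ =>
          outerCharge cofinField cofinCharge {k | δ < |f p.1 k - f p.2 k|})
        atTop (𝓝 0)) ∧
    ¬ ∃ g : ℕ → ℝ, TotallyMeasurable cofinField cofinCharge g ∧
        TendstoInCharge cofinField cofinCharge f g := by
  subst hf
  exact ⟨fun δ hδ => tendsto_outerCharge_indicator_Icc_sub hδ.le,
    fun ⟨g, _, hg⟩ => not_tendstoInCharge_indicator_Icc g hg⟩
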